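/- Let B be a finite Blaschke product of degree n, and set M = sup_{|z|=1}|B'(z)|, m = inf_{|z|=1}|B'(z)|. Then m ≤ n - 1 + n/M. -/

import Mathlib

/-!
On the unit circle `|B'(z)| = ∑ₖ (1 - |aₖ|²) / |z - aₖ|²`, a continuous function which attains
its maximum `M` at some `z₀`. Clearing denominators in `z B(z) = c` for `c = z₀ B(z₀)` gives a
polynomial of degree `n + 1` whose roots all lie on the circle (there `|z B(z)|` is `< 1` inside
and `> 1` outside) and are simple, its derivative at a root `w` being `P(w) (1 + |B'(w)|)` with
`P` the numerator of `B`. Reading off the coefficient of `zⁿ` of `P` from its Lagrange interpolation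
at these roots gives `∑ⱼ 1 / (1 + |B'(zⱼ)|) = 1`. Without the term `1 / (1 + M)` of `z₀`, the
remaining `n` terms sum to `M / (1 + M)`, so one of them is at least `M / (n (1 + M))`, that is,
`|B'(zⱼ)| ≤ n - 1 + n / M` there.
-/

open Polynomial Finset Complex ComplexConjugate Lagrange

namespace Polynomial

theorem eq_C_leadingCoeff_mul_nodal_roots {F : Type*} [Field F] [IsAlgClosed F] [DecidableEq F]
    {G : F[X]} (hG : ∀ w, G.IsRoot w → G.derivative.eval w ≠ 0) :
    G = C G.leadingCoeff * nodal G.roots.toFinset id := by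
  have hG0 : G ≠ 0 := by
    rintro rfl
    exact hG 0 (by simp) (by simp)
  have hnodup : G.roots.Nodup := by
    refine Multiset.nodup_iff_count_le_one.mpr fun w => ?_
    rw [count_roots]
    by_contra! h
    obtain ⟨hroot, hroot'⟩ := (one_lt_rootMultiplicity_iff_isRoot hG0).mp h
    exact hG w hroot hroot'
  conv_lhs =>
    rw [← C_leadingCoeff_mul_prod_multiset_X_sub_C (p := G) IsAlgClosed.card_roots_eq_natDegree]
  rw [nodal_eq, Finset.prod_eq_multiset_prod, Multiset.toFinset_val,
    Multiset.dedup_eq_self.mpr hnodup]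
  rfl

theorem coeff_card_sub_one_eq_mul_sum_div_eval_derivative {F : Type*} [Field F] [DecidableEq F]
    {G P : F[X]} {S : Finset F} {c : F} (hc : c ≠ 0) (hG : G = C c * nodal S id)
    (hP : P.degree < #S) :
    P.coeff (#S - 1) = c * ∑ w ∈ S, P.eval w / G.derivative.eval w := by
  rw [coeff_eq_sum Function.injective_id.injOn hP, mul_sum]
  refine sum_congr rfl fun w hw => ?_
  have hG' : G.derivative.eval w = c * ∏ v ∈ S.erase w, (w - v) := by
    rw [hG, derivative_C_mul, eval_C_mul]
    exact congrArg (c * ·) ((eval_nodal_derivative_eval_node_eq (v := id) hw).trans eval_nodal)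
  rw [hG']
  field_simp
  rfl

end Polynomial

theorem Complex.norm_one_sub_conj_mul_sq_sub_norm_sub_sq (a z : ℂ) :
    ‖1 - conj a * z‖ ^ 2 - ‖z - a‖ ^ 2 = (1 - ‖a‖ ^ 2) * (1 - ‖z‖ ^ 2) := by
  simp only [← normSq_eq_norm_sq, normSq_apply, mul_re, mul_im, conj_re, conj_im, sub_re, sub_im,
    one_re, one_im]
  ring

theorem Complex.one_sub_normSq_pos {a : ℂ} (ha : ‖a‖ < 1) : 0 < 1 - normSq a := by
  rw [normSq_eq_norm_sq, sub_pos]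
  exact pow_lt_one₀ (norm_nonneg a) ha two_ne_zero

theorem Complex.norm_sub_lt_norm_one_sub_conj_mul {a z : ℂ} (ha : ‖a‖ < 1) (hz : ‖z‖ < 1) :
    ‖z - a‖ < ‖1 - conj a * z‖ := by
  have := norm_one_sub_conj_mul_sq_sub_norm_sub_sq a z
  have : 0 < (1 - ‖a‖ ^ 2) * (1 - ‖z‖ ^ 2) := by
    apply mul_pos <;> nlinarith [norm_nonneg a, norm_nonneg z]
  exact (pow_lt_pow_iff_left₀ (norm_nonneg _) (norm_nonneg _) two_ne_zero).mp (by linarith)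

theorem Complex.norm_one_sub_conj_mul_lt_norm_sub {a z : ℂ} (ha : ‖a‖ < 1) (hz : 1 < ‖z‖) :
    ‖1 - conj a * z‖ < ‖z - a‖ := by
  have := norm_one_sub_conj_mul_sq_sub_norm_sub_sq a z
  have : (1 - ‖a‖ ^ 2) * (1 - ‖z‖ ^ 2) < 0 := by
    apply mul_neg_of_pos_of_neg <;> nlinarith [norm_nonneg a, norm_nonneg z]
  exact (pow_lt_pow_iff_left₀ (norm_nonneg _) (norm_nonneg _) two_ne_zero).mp (by linarith)

theorem Complex.sub_ne_zero_of_norm_lt_one_of_norm_eq_one {a z : ℂ} (ha : ‖a‖ < 1) (hz : ‖z‖ = 1) :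
    z - a ≠ 0 :=
  sub_ne_zero.mpr fun h => by simp [h] at hz; linarith

theorem Complex.one_sub_conj_mul_ne_zero {a z : ℂ} (ha : ‖a‖ < 1) (hz : ‖z‖ ≤ 1) :
    1 - conj a * z ≠ 0 := by
  refine sub_ne_zero.mpr fun h => ?_
  have : ‖conj a * z‖ < 1 := by
    rw [norm_mul, norm_conj]
    nlinarith [norm_nonneg a, norm_nonneg z]
  simp [← h] at this

theorem Complex.conj_sub_mul_of_norm_eq_one {z : ℂ} (hz : ‖z‖ = 1) (a : ℂ) :
    conj (z - a) * z = 1 - conj a * z := by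
  rw [map_sub, sub_mul, mul_comm, mul_conj, normSq_eq_norm_sq, hz]
  norm_num

theorem Complex.mul_logDeriv_blaschkeFactor {a z : ℂ} (ha : ‖a‖ < 1) (hz : ‖z‖ = 1) :
    z * logDeriv (fun w => (w - a) / (1 - conj a * w)) z =
      ((1 - normSq a) / normSq (z - a) : ℝ) := by
  have hnum := sub_ne_zero_of_norm_lt_one_of_norm_eq_one ha hz
  have hnum' : conj (z - a) ≠ 0 := (_root_.map_ne_zero _).mpr hnum
  have hden := one_sub_conj_mul_ne_zero ha hz.le
  have hz0 : z ≠ 0 := norm_ne_zero_iff.mp (by simp [hz])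
  rw [logDeriv_div z hnum hden (by fun_prop) (by fun_prop)]
  simp only [logDeriv_apply, deriv_fun_sub, deriv_const_sub', deriv_const_mul_id', deriv_id'',
    deriv_const', sub_zero, one_div, differentiableAt_fun_id, differentiableAt_const, ofReal_div,
    ofReal_sub, ofReal_one]
  rw [← conj_sub_mul_of_norm_eq_one hz a, ← mul_conj, ← mul_conj]
  field_simp
  linear_combination conj_sub_mul_of_norm_eq_one hz a

variable {ι : Type*} [Fintype ι]

noncomputable def blaschke (α : ℂ) (a : ι → ℂ) (z : ℂ) : ℂ :=
  α * ∏ k, (z - a k) / (1 - conj (a k) * z)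

noncomputable def poissonSum (a : ι → ℂ) (z : ℂ) : ℝ :=
  ∑ k, (1 - normSq (a k)) / normSq (z - a k)

variable {α : ℂ} {a : ι → ℂ} {z : ℂ}

theorem norm_blaschke (ha : ∀ k, ‖a k‖ < 1) (hz : ‖z‖ = 1) : ‖blaschke α a z‖ = ‖α‖ := by
  rw [blaschke, norm_mul, norm_prod, prod_eq_one, mul_one]
  intro k _
  rw [norm_div, ← conj_sub_mul_of_norm_eq_one hz, norm_mul, norm_conj, hz, mul_one,
    div_self (norm_ne_zero_iff.mpr (sub_ne_zero_of_norm_lt_one_of_norm_eq_one (ha k) hz))]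

theorem mul_deriv_blaschke (ha : ∀ k, ‖a k‖ < 1) (hα : α ≠ 0) (hz : ‖z‖ = 1) :
    z * deriv (blaschke α a) z = blaschke α a z * poissonSum a z := by
  have hden k := one_sub_conj_mul_ne_zero (ha k) hz.le
  have hfac : ∀ k ∈ univ, (z - a k) / (1 - conj (a k) * z) ≠ 0 := fun k _ =>
    div_ne_zero (sub_ne_zero_of_norm_lt_one_of_norm_eq_one (ha k) hz) (hden k)
  have hB : blaschke α a z ≠ 0 := mul_ne_zero hα (prod_ne_zero_iff.mpr hfac)
  have hlog : logDeriv (blaschke α a) z =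
      ∑ k, logDeriv (fun w => (w - a k) / (1 - conj (a k) * w)) z := by
    unfold blaschke
    rw [logDeriv_const_mul z α hα,
      logDeriv_prod hfac fun k _ => by fun_prop (disch := exact hden k)]
  rw [← mul_div_cancel₀ (deriv (blaschke α a) z) hB, ← logDeriv_apply, mul_left_comm, hlog,
    mul_sum, poissonSum, ofReal_sum]
  congr 1
  exact sum_congr rfl fun k _ => mul_logDeriv_blaschkeFactor (ha k) hz

theorem poissonSum_nonneg (ha : ∀ k, ‖a k‖ < 1) (z : ℂ) : 0 ≤ poissonSum a z :=
  sum_nonneg fun k _ => div_nonneg (one_sub_normSq_pos (ha k)).le (normSq_nonneg _)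

theorem poissonSum_pos [Nonempty ι] (ha : ∀ k, ‖a k‖ < 1) (hz : ‖z‖ = 1) :
    0 < poissonSum a z :=
  sum_pos (fun k _ => div_pos (one_sub_normSq_pos (ha k))
    (normSq_pos.mpr (sub_ne_zero_of_norm_lt_one_of_norm_eq_one (ha k) hz))) univ_nonempty

theorem norm_deriv_blaschke (ha : ∀ k, ‖a k‖ < 1) (hα : ‖α‖ = 1) (hz : ‖z‖ = 1) :
    ‖deriv (blaschke α a) z‖ = poissonSum a z := by
  have h := congrArg norm (mul_deriv_blaschke ha (norm_ne_zero_iff.mp (hα ▸ one_ne_zero)) hz)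
  rwa [norm_mul, norm_mul, hz, one_mul, norm_blaschke ha hz, hα, one_mul, norm_real,
    Real.norm_of_nonneg (poissonSum_nonneg ha z)] at h

theorem continuousOn_poissonSum (ha : ∀ k, ‖a k‖ < 1) :
    ContinuousOn (poissonSum a) {z | ‖z‖ = 1} :=
  continuousOn_finsetSum _ fun k _ => continuousOn_const.div (by fun_prop) fun z hz =>
    (normSq_pos.mpr (sub_ne_zero_of_norm_lt_one_of_norm_eq_one (ha k) hz)).ne'

noncomputable def blaschkeNum (α : ℂ) (a : ι → ℂ) : ℂ[X] := C α * nodal univ a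

noncomputable def blaschkeDen (a : ι → ℂ) : ℂ[X] := ∏ k, (1 - C (conj (a k)) * X)

noncomputable def blaschkeLevelPoly (α c : ℂ) (a : ι → ℂ) : ℂ[X] :=
  X * blaschkeNum α a - C c * blaschkeDen a

theorem eval_blaschkeNum_div_eval_blaschkeDen (α : ℂ) (a : ι → ℂ) (z : ℂ) :
    (blaschkeNum α a).eval z / (blaschkeDen a).eval z = blaschke α a z := by
  simp [blaschkeNum, blaschkeDen, blaschke, eval_nodal, eval_prod, prod_div_distrib, mul_div_assoc]

theorem eval_blaschkeDen_ne_zero (ha : ∀ k, ‖a k‖ < 1) (hz : ‖z‖ ≤ 1) :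
    (blaschkeDen a).eval z ≠ 0 := by
  simpa [blaschkeDen, eval_prod, prod_ne_zero_iff] using fun k => one_sub_conj_mul_ne_zero (ha k) hz

theorem eval_blaschkeNum_ne_zero (hα : α ≠ 0) (ha : ∀ k, ‖a k‖ < 1) (hz : ‖z‖ = 1) :
    (blaschkeNum α a).eval z ≠ 0 := by
  simpa [blaschkeNum, eval_nodal, prod_ne_zero_iff, hα] using
    fun k => sub_ne_zero_of_norm_lt_one_of_norm_eq_one (ha k) hz

theorem natDegree_blaschkeNum (hα : α ≠ 0) : (blaschkeNum α a).natDegree = Fintype.card ι := by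
  rw [blaschkeNum, natDegree_C_mul hα, natDegree_nodal, card_univ]

theorem coeff_blaschkeNum_card : (blaschkeNum α a).coeff (Fintype.card ι) = α := by
  rw [blaschkeNum, coeff_C_mul, ← card_univ, ← natDegree_nodal (v := a),
    nodal_monic.coeff_natDegree, mul_one]

theorem natDegree_blaschkeDen_le : (blaschkeDen a).natDegree ≤ Fintype.card ι := by
  refine (natDegree_prod_le _ _).trans ((sum_le_card_nsmul _ _ 1 fun k _ => ?_).trans (by simp))
  compute_degree

theorem coeff_blaschkeLevelPoly_card_add_one (c : ℂ) :
    (blaschkeLevelPoly α c a).coeff (Fintype.card ι + 1) = α := by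
  rw [blaschkeLevelPoly, coeff_sub, coeff_X_mul, coeff_blaschkeNum_card, coeff_C_mul,
    coeff_eq_zero_of_natDegree_lt (Nat.lt_succ_of_le natDegree_blaschkeDen_le), mul_zero, sub_zero]

theorem natDegree_blaschkeLevelPoly (hα : α ≠ 0) (c : ℂ) :
    (blaschkeLevelPoly α c a).natDegree = Fintype.card ι + 1 := by
  refine natDegree_eq_of_le_of_coeff_ne_zero ?_ (by rwa [coeff_blaschkeLevelPoly_card_add_one])
  refine (natDegree_sub_le _ _).trans (max_le ?_ ?_)
  · exact natDegree_mul_le.trans (by rw [natDegree_X, natDegree_blaschkeNum hα, add_comm])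
  · exact (natDegree_C_mul_le _ _).trans (natDegree_blaschkeDen_le.trans (Nat.le_succ _))

theorem leadingCoeff_blaschkeLevelPoly (hα : α ≠ 0) (c : ℂ) :
    (blaschkeLevelPoly α c a).leadingCoeff = α := by
  rw [leadingCoeff, natDegree_blaschkeLevelPoly hα, coeff_blaschkeLevelPoly_card_add_one]

variable {c : ℂ}

theorem isRoot_blaschkeLevelPoly_iff (ha : ∀ k, ‖a k‖ < 1) (hz : ‖z‖ = 1) :
    (blaschkeLevelPoly α c a).IsRoot z ↔ z * blaschke α a z = c := by
  have hQ := eval_blaschkeDen_ne_zero ha hz.le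
  rw [← eval_blaschkeNum_div_eval_blaschkeDen, IsRoot, blaschkeLevelPoly, eval_sub, eval_mul,
    eval_mul, eval_X, eval_C, sub_eq_zero, mul_div_assoc', div_eq_iff hQ]

theorem norm_mul_prod_eq_of_isRoot_blaschkeLevelPoly (hα : ‖α‖ = 1) (hc : ‖c‖ = 1)
    (h : (blaschkeLevelPoly α c a).IsRoot z) :
    ‖z‖ * ∏ k, ‖z - a k‖ = ∏ k, ‖1 - conj (a k) * z‖ := by
  rw [IsRoot, blaschkeLevelPoly, eval_sub, sub_eq_zero] at h
  simpa [blaschkeNum, blaschkeDen, eval_nodal, eval_prod, norm_prod, hα, hc, mul_left_comm]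
    using congrArg norm h

theorem norm_eq_one_of_isRoot_blaschkeLevelPoly (ha : ∀ k, ‖a k‖ < 1) (hα : ‖α‖ = 1)
    (hc : ‖c‖ = 1) (h : (blaschkeLevelPoly α c a).IsRoot z) : ‖z‖ = 1 := by
  have hnorm := norm_mul_prod_eq_of_isRoot_blaschkeLevelPoly hα hc h
  by_contra hz
  rcases lt_or_gt_of_ne hz with hz | hz
  · have hpos : 0 < ∏ k, ‖1 - conj (a k) * z‖ :=
      prod_pos fun k _ => norm_pos_iff.mpr (one_sub_conj_mul_ne_zero (ha k) hz.le)
    have hle : ∏ k, ‖z - a k‖ ≤ ∏ k, ‖1 - conj (a k) * z‖ :=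
      prod_le_prod (fun k _ => norm_nonneg _)
        fun k _ => (norm_sub_lt_norm_one_sub_conj_mul (ha k) hz).le
    refine (lt_of_le_of_lt ?_ (mul_lt_of_lt_one_left hpos hz)).ne hnorm
    exact mul_le_mul_of_nonneg_left hle (norm_nonneg z)
  · have hpos : 0 < ∏ k, ‖z - a k‖ :=
      prod_pos fun k _ => (norm_nonneg _).trans_lt (norm_one_sub_conj_mul_lt_norm_sub (ha k) hz)
    have hle : ∏ k, ‖1 - conj (a k) * z‖ ≤ ∏ k, ‖z - a k‖ :=
      prod_le_prod (fun k _ => norm_nonneg _)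
        fun k _ => (norm_one_sub_conj_mul_lt_norm_sub (ha k) hz).le
    exact (hle.trans_lt (lt_mul_of_one_lt_left hpos hz)).ne' hnorm

theorem eval_derivative_blaschkeLevelPoly (ha : ∀ k, ‖a k‖ < 1) (hα : α ≠ 0) (hz : ‖z‖ = 1)
    (hroot : z * blaschke α a z = c) :
    (blaschkeLevelPoly α c a).derivative.eval z =
      (blaschkeNum α a).eval z * (1 + poissonSum a z) := by
  have hB := mul_deriv_blaschke ha hα hz
  rw [← funext (eval_blaschkeNum_div_eval_blaschkeDen α a)] at hB hroot
  rw [(((blaschkeNum α a).hasDerivAt z).fun_div ((blaschkeDen a).hasDerivAt z)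
    (eval_blaschkeDen_ne_zero ha hz.le)).deriv] at hB
  subst hroot
  simp only [blaschkeLevelPoly, derivative_sub, derivative_mul, derivative_X, derivative_C,
    eval_sub, eval_add, eval_mul, eval_X, eval_C, zero_mul, zero_add, one_mul]
  have hQ := eval_blaschkeDen_ne_zero (z := z) ha hz.le
  field_simp at hB ⊢
  linear_combination hB

theorem eval_derivative_blaschkeLevelPoly_of_isRoot (ha : ∀ k, ‖a k‖ < 1) (hα : ‖α‖ = 1)
    (hc : ‖c‖ = 1) (h : (blaschkeLevelPoly α c a).IsRoot z) :
    (blaschkeLevelPoly α c a).derivative.eval z =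
      (blaschkeNum α a).eval z * (1 + poissonSum a z) :=
  have hz := norm_eq_one_of_isRoot_blaschkeLevelPoly ha hα hc h
  eval_derivative_blaschkeLevelPoly ha (norm_ne_zero_iff.mp (hα ▸ one_ne_zero)) hz
    ((isRoot_blaschkeLevelPoly_iff ha hz).mp h)

theorem blaschkeLevelPoly_eq_C_mul_nodal_roots [DecidableEq ℂ] (ha : ∀ k, ‖a k‖ < 1)
    (hα : ‖α‖ = 1) (hc : ‖c‖ = 1) :
    blaschkeLevelPoly α c a = C α * nodal (blaschkeLevelPoly α c a).roots.toFinset id := by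
  have hα0 : α ≠ 0 := norm_ne_zero_iff.mp (hα ▸ one_ne_zero)
  have hsimple : ∀ z, (blaschkeLevelPoly α c a).IsRoot z →
      (blaschkeLevelPoly α c a).derivative.eval z ≠ 0 := fun z h => by
    rw [eval_derivative_blaschkeLevelPoly_of_isRoot ha hα hc h]
    exact mul_ne_zero
      (eval_blaschkeNum_ne_zero hα0 ha (norm_eq_one_of_isRoot_blaschkeLevelPoly ha hα hc h))
      (by exact_mod_cast (add_pos_of_pos_of_nonneg one_pos (poissonSum_nonneg ha z)).ne')
  simpa only [leadingCoeff_blaschkeLevelPoly hα0] using eq_C_leadingCoeff_mul_nodal_roots hsimple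

theorem exists_finset_sum_inv_one_add_poissonSum_eq_one (ha : ∀ k, ‖a k‖ < 1) (hα : ‖α‖ = 1)
    (hc : ‖c‖ = 1) :
    ∃ S : Finset ℂ, #S = Fintype.card ι + 1 ∧
      (∀ z, z ∈ S ↔ ‖z‖ = 1 ∧ z * blaschke α a z = c) ∧
      ∑ z ∈ S, (1 + poissonSum a z)⁻¹ = 1 := by
  classical
  have hα0 : α ≠ 0 := norm_ne_zero_iff.mp (hα ▸ one_ne_zero)
  set G := blaschkeLevelPoly α c a
  set S := G.roots.toFinset
  have hGS : G = C α * nodal S id := blaschkeLevelPoly_eq_C_mul_nodal_roots ha hα hc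
  have hcard : #S = Fintype.card ι + 1 := by
    have : G.natDegree = Fintype.card ι + 1 := natDegree_blaschkeLevelPoly hα0 c
    rwa [hGS, natDegree_C_mul hα0, natDegree_nodal] at this
  have hG0 : G ≠ 0 := by
    rw [hGS]
    exact mul_ne_zero (C_ne_zero.mpr hα0) nodal_ne_zero
  have hmem {z} : z ∈ S ↔ G.IsRoot z := by rw [Multiset.mem_toFinset, mem_roots hG0]
  refine ⟨S, hcard, fun z => ?_, ?_⟩
  · rw [hmem]
    refine ⟨fun h => ?_, fun ⟨hz, h⟩ => (isRoot_blaschkeLevelPoly_iff ha hz).mpr h⟩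
    have hz := norm_eq_one_of_isRoot_blaschkeLevelPoly ha hα hc h
    exact ⟨hz, (isRoot_blaschkeLevelPoly_iff ha hz).mp h⟩
  · have hdeg : (blaschkeNum α a).degree < #S := by
      refine degree_le_natDegree.trans_lt ?_
      rw [natDegree_blaschkeNum hα0, hcard]
      exact_mod_cast Nat.lt_succ_self _
    have hsum := coeff_card_sub_one_eq_mul_sum_div_eval_derivative hα0 hGS hdeg
    rw [hcard, Nat.add_sub_cancel, coeff_blaschkeNum_card] at hsum
    have hterm : ∀ z ∈ S, (blaschkeNum α a).eval z / G.derivative.eval z =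
        ((1 + poissonSum a z)⁻¹ : ℝ) := fun z hz => by
      have h := hmem.mp hz
      rw [eval_derivative_blaschkeLevelPoly_of_isRoot ha hα hc h, div_mul_cancel_left₀
        (eval_blaschkeNum_ne_zero hα0 ha (norm_eq_one_of_isRoot_blaschkeLevelPoly ha hα hc h))]
      push_cast
      rfl
    rw [sum_congr rfl hterm] at hsum
    exact_mod_cast mul_left_cancel₀ hα0 (hsum.symm.trans (mul_one α).symm)

theorem Finset.exists_le_of_sum_inv_one_add_eq_one {β : Type*} {S : Finset β} {f : β → ℝ} {z₀ : β}
    {n : ℕ} (hn : 1 ≤ n) (hcard : #S = n + 1) (hz₀ : z₀ ∈ S) (hf₀ : 0 < f z₀)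
    (hsum : ∑ z ∈ S, (1 + f z)⁻¹ = 1) :
    ∃ z ∈ S, f z ≤ n - 1 + n / f z₀ := by
  classical
  have hn' : (0 : ℝ) < n := by exact_mod_cast hn
  have hcard' : #(S.erase z₀) = n := by rw [card_erase_of_mem hz₀, hcard, Nat.add_sub_cancel]
  rw [← add_sum_erase S _ hz₀, ← eq_sub_iff_add_eq'] at hsum
  have hc : 0 < f z₀ / ((1 + f z₀) * n) := by positivity
  obtain ⟨z, hz, hle⟩ := exists_le_of_sum_le (s := S.erase z₀)
    (f := fun _ => f z₀ / ((1 + f z₀) * n)) (g := fun z => (1 + f z)⁻¹)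
    (card_pos.mp (by omega)) (by rw [sum_const, hcard', hsum, nsmul_eq_mul]; field_simp; linarith)
  refine ⟨z, mem_of_mem_erase hz, ?_⟩
  have := (le_inv_comm₀ hc (inv_pos.mp (hc.trans_le hle))).mp hle
  rw [inv_div, add_mul, add_div, one_mul, mul_div_cancel_left₀ _ hf₀.ne'] at this
  linarith

/-- For a Blaschke product of degree `n`, with `M = sup_{|z|=1}|B'|` and
`m = inf_{|z|=1}|B'|`, one has `m ≤ n - 1 + n/M`. -/
theorem inf_le_bound (n : ℕ) (hn : 1 ≤ n) (a : Fin n → ℂ)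
    (ha : ∀ k, ‖a k‖ < 1) (α : ℂ) (hα : ‖α‖ = 1)
    (B : ℂ → ℂ)
    (hB : ∀ z, B z = α * ∏ k, (z - a k) / (1 - (starRingEnd ℂ) (a k) * z))
    (M m : ℝ)
    (hM : M = sSup ((fun z => ‖deriv B z‖) '' {z : ℂ | ‖z‖ = 1}))
    (hm : m = sInf ((fun z => ‖deriv B z‖) '' {z : ℂ | ‖z‖ = 1})) :
    m ≤ n - 1 + n / M := by
  obtain rfl : B = blaschke α a := funext hB
  have : Nonempty (Fin n) := ⟨⟨0, hn⟩⟩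
  have himage : (fun z => ‖deriv (blaschke α a) z‖) '' {z : ℂ | ‖z‖ = 1} =
      poissonSum a '' {z : ℂ | ‖z‖ = 1} :=
    Set.image_congr fun z hz => norm_deriv_blaschke ha hα hz
  rw [himage] at hM hm
  have hcompact : IsCompact {z : ℂ | ‖z‖ = 1} := by
    simpa [Metric.sphere] using isCompact_sphere (0 : ℂ) 1
  obtain ⟨z₀, hz₀, hmax⟩ := hcompact.exists_isMaxOn ⟨1, by simp⟩ (continuousOn_poissonSum ha)
  have hM₀ : M = poissonSum a z₀ :=
    hM ▸ IsGreatest.csSup_eq ⟨Set.mem_image_of_mem _ hz₀, Set.forall_mem_image.mpr hmax⟩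
  obtain ⟨S, hcard, hS, hsum⟩ := exists_finset_sum_inv_one_add_poissonSum_eq_one ha hα
    (c := z₀ * blaschke α a z₀) (by rw [norm_mul, hz₀, norm_blaschke ha hz₀, hα, one_mul])
  obtain ⟨w, hw, hle⟩ := exists_le_of_sum_inv_one_add_eq_one hn (by simpa using hcard)
    ((hS z₀).mpr ⟨hz₀, rfl⟩) (poissonSum_pos ha hz₀) hsum
  have hmw : m ≤ poissonSum a w :=
    hm ▸ csInf_le ⟨0, Set.forall_mem_image.mpr fun z _ => poissonSum_nonneg ha z⟩
      (Set.mem_image_of_mem _ ((hS w).mp hw).1)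
  rw [hM₀]
  linarith
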